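/- arXiv:math/9912078 — 2 statements merged into one kernel-verified Lean document; each statement's English description precedes it below -/
import Mathlib

section
/- Schützenberger's identity: let u, v be elements of a ℂ(q)-algebra (completed so that power series make sense, e.g. u, v nilpotent or formal) with uv = q²vu. Define the q-exponential s_q(w) = Σ_{k=0}^∞ q^{k(k-1)/2}(-1)^k w^k / ((q-q⁻¹)(q²-q⁻²)···(q^k - q^{-k})) (with the convention that the k=0 term is 1). Then s_q(u)·s_q(v) = s_q(u+v). -/
/-! If `v u = t u v` with `t = q⁻²`, the noncommutative binomial theorem expands `(u + v)ⁿ` with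
the Gaussian binomial coefficients `[n, i]_t`, and the coefficients `c_k` of `s_q` satisfy
`c_i c_{n-i} = [n, i]_t c_n`, because an identity among the ratios `c_{k+1} / c_k` makes
`c_i c_{n-i} / c_n` satisfy the `t`-Pascal recursion.
Hence the degree-`n` parts of `s_q(u) s_q(v)` and `s_q(u + v)` agree, and nilpotency makes the
truncations at `2N` exact on both sides. -/

/-- The coefficients of the q-exponential
`s_q(w) = Σ_k (-1)^k q^{k(k-1)/2} w^k / ∏_{j=1}^k (q^j - q⁻ʲ)`. -/
noncomputable def sqCoeff (q : ℂ) (k : ℕ) : ℂ :=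
  (-1) ^ k * q ^ (k * (k - 1) / 2) / ∏ j ∈ Finset.range k, (q ^ (j + 1) - q⁻¹ ^ (j + 1))

/-- Truncation of the q-exponential series applied to an algebra element; for a
nilpotent argument a sufficiently long truncation equals the genuine series. -/
noncomputable def sqTrunc {A : Type*} [Ring A] [Algebra ℂ A] (q : ℂ) (x : A) (n : ℕ) : A :=
  ∑ k ∈ Finset.range n, sqCoeff q k • x ^ k

open Finset

section GaussBinom

variable {R : Type*} [CommSemiring R]

noncomputable def gaussBinom (t : R) : ℕ → ℕ → R
  | 0, 0 => 1
  | 0, _ + 1 => 0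
  | _ + 1, 0 => 1
  | n + 1, i + 1 => t ^ (n - i) * gaussBinom t n i + gaussBinom t n (i + 1)

@[simp]
lemma gaussBinom_zero_right (t : R) (n : ℕ) : gaussBinom t n 0 = 1 := by
  cases n <;> rfl

lemma gaussBinom_eq_zero_of_lt (t : R) : ∀ {n i : ℕ}, n < i → gaussBinom t n i = 0
  | 0, _ + 1, _ => rfl
  | n + 1, i + 1, h => by
    rw [gaussBinom, gaussBinom_eq_zero_of_lt t (by omega : n < i),
      gaussBinom_eq_zero_of_lt t (by omega : n < i + 1), mul_zero, add_zero]

@[simp]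
lemma gaussBinom_self (t : R) : ∀ n : ℕ, gaussBinom t n n = 1
  | 0 => rfl
  | n + 1 => by
    rw [gaussBinom, gaussBinom_self t n, gaussBinom_eq_zero_of_lt t (Nat.lt_succ_self n)]
    simp

variable {A : Type*} [Semiring A] [Algebra R A] {t : R} {u v : A}

lemma pow_mul_eq_smul_mul_pow (hvu : v * u = t • (u * v)) (k : ℕ) :
    v ^ k * u = t ^ k • (u * v ^ k) := by
  induction k with
  | zero => simp
  | succ k ih =>
    rw [pow_succ, mul_assoc, hvu, mul_smul_comm, ← mul_assoc, ih, smul_mul_assoc, smul_smul,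
      mul_assoc, ← pow_succ, ← pow_succ']

theorem add_pow_eq_sum_gaussBinom (hvu : v * u = t • (u * v)) (n : ℕ) :
    (u + v) ^ n = ∑ i ∈ range (n + 1), gaussBinom t n i • (u ^ i * v ^ (n - i)) := by
  induction n with
  | zero => simp
  | succ n ih =>
    have hmul : ∀ i ∈ range (n + 1), gaussBinom t n i • (u ^ i * v ^ (n - i)) * (u + v) =
        (t ^ (n - i) * gaussBinom t n i) • (u ^ (i + 1) * v ^ (n - i))
          + gaussBinom t n i • (u ^ i * v ^ (n + 1 - i)) := by
      intro i hi
      rw [mul_add, smul_mul_assoc, smul_mul_assoc, mul_assoc, pow_mul_eq_smul_mul_pow hvu,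
        mul_smul_comm, smul_smul, ← mul_assoc, ← pow_succ, mul_assoc, ← pow_succ,
        Nat.sub_add_comm (mem_range_succ_iff.mp hi), mul_comm (gaussBinom t n i)]
    have hshift : ∑ i ∈ range (n + 1), gaussBinom t n i • (u ^ i * v ^ (n + 1 - i)) =
        ∑ i ∈ range (n + 1), gaussBinom t n (i + 1) • (u ^ (i + 1) * v ^ (n - i))
          + v ^ (n + 1) := by
      rw [sum_range_succ', sum_range_succ (fun i => gaussBinom t n (i + 1) • _),
        gaussBinom_eq_zero_of_lt t n.lt_succ_self]
      simp
    rw [pow_succ, ih, sum_mul, sum_congr rfl hmul, sum_add_distrib, hshift,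
      sum_range_succ' _ (n + 1)]
    simp only [gaussBinom, add_smul, sum_add_distrib, Nat.add_sub_add_right]
    simp [add_assoc]

end GaussBinom

lemma pow_sub_inv_pow_eq_div {K : Type*} [Field K] {q : K} (hq : q ≠ 0) (m : ℕ) :
    q ^ m - q⁻¹ ^ m = (q ^ (2 * m) - 1) / q ^ m := by
  rw [inv_pow]
  field_simp
  ring

noncomputable def sqRatio (q : ℂ) (k : ℕ) : ℂ :=
  -q ^ k / (q ^ (k + 1) - q⁻¹ ^ (k + 1))

@[simp]
lemma sqCoeff_zero (q : ℂ) : sqCoeff q 0 = 1 := by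
  simp [sqCoeff]

lemma sqCoeff_succ (q : ℂ) (k : ℕ) : sqCoeff q (k + 1) = sqCoeff q k * sqRatio q k := by
  rw [sqCoeff, sqCoeff, sqRatio, prod_range_succ, Nat.triangle_succ, pow_add, div_mul_div_comm]
  ring

lemma sqRatio_eq_div {q : ℂ} (hq : q ≠ 0) (k : ℕ) :
    sqRatio q k = -q ^ (2 * k + 1) / (q ^ (2 * (k + 1)) - 1) := by
  rw [sqRatio, pow_sub_inv_pow_eq_div hq, div_div_eq_mul_div]
  ring

section NotRootOfUnity

variable {q : ℂ} (hq : q ≠ 0) (hroot : ∀ j : ℕ, j ≠ 0 → q ^ (2 * j) ≠ 1)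
include hq hroot

lemma sqRatio_mul_sqRatio (a b : ℕ) :
    sqRatio q a * sqRatio q b =
      ((q ^ 2)⁻¹ ^ (b + 1) * sqRatio q b + sqRatio q a) * sqRatio q (a + b + 1) := by
  have hden : ∀ k : ℕ, q ^ (2 * (k + 1)) - 1 ≠ 0 := fun k =>
    sub_ne_zero.mpr (hroot (k + 1) k.succ_ne_zero)
  have ha := hden a
  have hb := hden b
  have hn := hden (a + b + 1)
  simp only [sqRatio_eq_div hq, inv_pow]
  field_simp
  ring

lemma sqCoeff_mul_sqCoeff (a b : ℕ) :
    sqCoeff q a * sqCoeff q b = gaussBinom (q ^ 2)⁻¹ (a + b) a * sqCoeff q (a + b) := by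
  induction a generalizing b with
  | zero => simp
  | succ a iha =>
    induction b with
    | zero => simp
    | succ b ihb =>
      have h1 : sqCoeff q a * sqCoeff q (b + 1) =
          gaussBinom (q ^ 2)⁻¹ (a + b + 1) a * sqCoeff q (a + b + 1) := iha (b + 1)
      have h2 : sqCoeff q (a + 1) * sqCoeff q b =
          gaussBinom (q ^ 2)⁻¹ (a + b + 1) (a + 1) * sqCoeff q (a + b + 1) := by
        rwa [Nat.add_right_comm] at ihb
      rw [show a + 1 + (b + 1) = a + b + 1 + 1 by omega, gaussBinom,
        show a + b + 1 - a = b + 1 by omega, sqCoeff_succ q (a + b + 1)]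
      rw [sqCoeff_succ q a, sqCoeff_succ q b] at *
      linear_combination (sqCoeff q a * sqCoeff q b) * sqRatio_mul_sqRatio hq hroot a b
        + ((q ^ 2)⁻¹ ^ (b + 1) * sqRatio q (a + b + 1)) * h1 + sqRatio q (a + b + 1) * h2

end NotRootOfUnity

section Algebra

variable {A : Type*} [Ring A] [Algebra ℂ A]

lemma sqTrunc_eq_of_pow_eq_zero (q : ℂ) {x : A} {N M : ℕ} (hx : x ^ N = 0) (hNM : N ≤ M) :
    sqTrunc q x M = sqTrunc q x N := by
  obtain ⟨k, rfl⟩ := Nat.exists_eq_add_of_le hNM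
  rw [sqTrunc, sum_range_add, sqTrunc, add_eq_left]
  exact sum_eq_zero fun j _ => by rw [pow_eq_zero_of_le (Nat.le_add_right N j) hx, smul_zero]

lemma sqCoeff_smul_add_pow {q : ℂ} (hq : q ≠ 0) (hroot : ∀ j : ℕ, j ≠ 0 → q ^ (2 * j) ≠ 1)
    {u v : A} (huv : u * v = q ^ 2 • (v * u)) (n : ℕ) :
    sqCoeff q n • (u + v) ^ n =
      ∑ i ∈ range (n + 1), (sqCoeff q i • u ^ i) * (sqCoeff q (n - i) • v ^ (n - i)) := by
  have hvu : v * u = (q ^ 2)⁻¹ • (u * v) := by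
    rw [huv, smul_smul, inv_mul_cancel₀ (pow_ne_zero 2 hq), one_smul]
  rw [add_pow_eq_sum_gaussBinom hvu, smul_sum]
  refine sum_congr rfl fun i hi => ?_
  obtain ⟨j, rfl⟩ := Nat.exists_eq_add_of_le (mem_range_succ_iff.mp hi)
  rw [smul_smul, Nat.add_sub_cancel_left, smul_mul_smul_comm, sqCoeff_mul_sqCoeff hq hroot,
    mul_comm]

end Algebra

/-- Schützenberger's identity: if `u v = q² v u` (with `q` not a
root of unity, and `u, v` nilpotent so that the q-exponential series make sense),
then `s_q(u) s_q(v) = s_q(u + v)`. -/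
theorem schutzenberger_identity {A : Type*} [Ring A] [Algebra ℂ A]
    (q : ℂ) (hq : q ≠ 0) (hroot : ∀ j : ℕ, j ≠ 0 → q ^ (2 * j) ≠ 1)
    (u v : A) (N : ℕ) (hu : u ^ N = 0) (hv : v ^ N = 0)
    (huv : u * v = q ^ 2 • (v * u)) :
    sqTrunc q u (2 * N) * sqTrunc q v (2 * N) = sqTrunc q (u + v) (2 * N) := by
  have htrunc : ∀ i ∈ range (2 * N), sqCoeff q i • u ^ i * sqTrunc q v (2 * N) =
      sqCoeff q i • u ^ i * sqTrunc q v (2 * N - i) := by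
    intro i _
    rcases lt_or_ge i N with hi | hi
    · rw [sqTrunc_eq_of_pow_eq_zero q hv (by omega : N ≤ 2 * N),
        sqTrunc_eq_of_pow_eq_zero q hv (by omega : N ≤ 2 * N - i)]
    · rw [pow_eq_zero_of_le hi hu, smul_zero, zero_mul, zero_mul]
  calc sqTrunc q u (2 * N) * sqTrunc q v (2 * N)
      = ∑ i ∈ range (2 * N), sqCoeff q i • u ^ i * sqTrunc q v (2 * N - i) := by
        rw [sqTrunc, sum_mul, sum_congr rfl htrunc]
    _ = ∑ n ∈ range (2 * N), ∑ i ∈ range (n + 1),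
          (sqCoeff q i • u ^ i) * (sqCoeff q (n - i) • v ^ (n - i)) := by
        simp only [sqTrunc, mul_sum]
        exact (sum_range_diag_flip (2 * N)
          fun i j => sqCoeff q i • u ^ i * sqCoeff q j • v ^ j).symm
    _ = sqTrunc q (u + v) (2 * N) := by
        simp only [sqTrunc, sqCoeff_smul_add_pow hq hroot huv]
end

section
/- Pentagon identity for the q-exponential: if uv = q²vu (in a suitable completed algebra, e.g. formal power series in two q-commuting variables), then s_q(v)·s_q(u) = s_q(u + v + q⁻¹uv), and moreover s_q(u + v + q⁻¹uv) = s_q(u)·s_q(q⁻¹uv)·s_q(v). -/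
/-!
Two properties of `s_q` carry the proof. First, if `x y = q² y x` then
`s_q(x + y) = s_q(x) s_q(y)`: expand `(x + y)ⁿ` by the q-binomial theorem and use
`s_{a+b} [a+b choose b]_{q²} = s_a s_b q^{2ab}`, which follows from the closed form
`s_k = q^{k²} / (q²; q²)_k`. Second, `s_q(q⁻² x) = (1 + q⁻¹ x) s_q(x)`.

Since `v u = q⁻² u v`, the second property gives `s_q(v) u = (u + q⁻¹ u v) s_q(v)`, hence
`s_q(v) s_q(u) = s_q(u + q⁻¹ u v) s_q(v)`. The pairs `(u, q⁻¹ u v)` and `(u + q⁻¹ u v, v)` again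
`q²`-commute, so the first property splits `s_q(u + q⁻¹ u v + v)` into
`s_q(u + q⁻¹ u v) s_q(v) = s_q(u) s_q(q⁻¹ u v) s_q(v)`. All elements involved are nilpotent of
order `N`, so truncating at `2 N` makes every identity exact.
-/

open Finset

theorem sum_range_sum_range_succ_sub_eq_sum_range_sum_range {M : Type*} [AddCommMonoid M]
    (K : ℕ) (f : ℕ → ℕ → M) (hf : ∀ a b, K ≤ a + b → f a b = 0) :
    ∑ n ∈ range K, ∑ j ∈ range (n + 1), f (n - j) j = ∑ a ∈ range K, ∑ b ∈ range K, f a b :=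
  calc ∑ n ∈ range K, ∑ j ∈ range (n + 1), f (n - j) j
      = ∑ j ∈ range K, ∑ n ∈ Ico j K, f (n - j) j :=
        sum_comm' fun n j => by simp only [mem_range, mem_Ico]; omega
    _ = ∑ j ∈ range K, ∑ a ∈ range K, f a j := by
        refine sum_congr rfl fun j _ => ?_
        simp only [sum_Ico_eq_sum_range, Nat.add_sub_cancel_left]
        refine sum_subset (range_subset_range.2 (Nat.sub_le K j)) fun a ha ha' => hf a j ?_
        simp only [mem_range] at ha ha'
        omega
    _ = ∑ a ∈ range K, ∑ b ∈ range K, f a b := sum_comm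

section GaussianBinomial

variable {R : Type*} [CommRing R] (Q : R)

def qFactorial (n : ℕ) : R := ∏ j ∈ range n, (1 - Q ^ (j + 1))

def qBinom : ℕ → ℕ → R
  | _, 0 => 1
  | 0, _ + 1 => 0
  | n + 1, k + 1 => qBinom n (k + 1) + Q ^ (n - k) * qBinom n k

@[simp] theorem qFactorial_zero : qFactorial Q 0 = 1 := prod_range_zero _

theorem qFactorial_succ (n : ℕ) : qFactorial Q (n + 1) = qFactorial Q n * (1 - Q ^ (n + 1)) :=
  prod_range_succ _ _

@[simp] theorem qBinom_zero_right (n : ℕ) : qBinom Q n 0 = 1 := by cases n <;> rfl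

theorem qBinom_succ_succ (n k : ℕ) :
    qBinom Q (n + 1) (k + 1) = qBinom Q n (k + 1) + Q ^ (n - k) * qBinom Q n k := rfl

theorem qBinom_eq_zero_of_lt {n k : ℕ} (h : n < k) : qBinom Q n k = 0 := by
  induction n generalizing k with
  | zero => obtain ⟨k, rfl⟩ := Nat.exists_eq_succ_of_ne_zero h.ne'; rfl
  | succ n ih =>
    obtain ⟨k, rfl⟩ := Nat.exists_eq_succ_of_ne_zero (Nat.ne_zero_of_lt h)
    rw [qBinom_succ_succ, ih (by omega), ih (by omega), mul_zero, add_zero]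

@[simp] theorem qBinom_self (n : ℕ) : qBinom Q n n = 1 := by
  induction n with
  | zero => rfl
  | succ n ih =>
    rw [qBinom_succ_succ, qBinom_eq_zero_of_lt Q n.lt_succ_self, ih, Nat.sub_self]
    simp

theorem qBinom_add_mul_qFactorial_mul_qFactorial (a b : ℕ) :
    qBinom Q (a + b) b * qFactorial Q a * qFactorial Q b = qFactorial Q (a + b) := by
  induction b generalizing a with
  | zero => simp
  | succ b ihb =>
    induction a with
    | zero => simp
    | succ a iha =>
      have hpascal : qBinom Q (a + 1 + (b + 1)) (b + 1) =
          qBinom Q (a + (b + 1)) (b + 1) + Q ^ (a + 1) * qBinom Q (a + (b + 1)) b := by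
        rw [show a + 1 + (b + 1) = a + (b + 1) + 1 by omega, qBinom_succ_succ,
          show a + (b + 1) - b = a + 1 by omega]
      have ihb' := ihb (a + 1)
      rw [show a + 1 + b = a + (b + 1) by omega, qFactorial_succ Q a] at ihb'
      rw [qFactorial_succ Q b] at iha
      rw [hpascal, show a + 1 + (b + 1) = a + (b + 1) + 1 by omega, qFactorial_succ Q a,
        qFactorial_succ Q b, qFactorial_succ Q (a + (b + 1))]
      linear_combination (1 - Q ^ (a + 1)) * iha + Q ^ (a + 1) * (1 - Q ^ (b + 1)) * ihb'

end GaussianBinomial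

section QCommuting

variable {R A : Type*} [CommRing R] [Ring A] [Algebra R A] {s : R} {x y : A}

theorem pow_mul_pow_of_mul_eq_smul (h : x * y = s • (y * x)) (a b : ℕ) :
    x ^ a * y ^ b = s ^ (a * b) • (y ^ b * x ^ a) := by
  have hx : ∀ b : ℕ, x * y ^ b = s ^ b • (y ^ b * x) := by
    intro b
    induction b with
    | zero => simp
    | succ b ih =>
      rw [pow_succ, ← mul_assoc, ih, smul_mul_assoc, mul_assoc, h, mul_smul_comm, smul_smul,
        ← mul_assoc, pow_succ]
  induction a with
  | zero => simp
  | succ a ih =>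
    rw [pow_succ, mul_assoc, hx, mul_smul_comm, ← mul_assoc, ih, smul_mul_assoc, smul_smul,
      mul_assoc, ← pow_succ, ← pow_add, Nat.succ_mul, add_comm b]

theorem add_pow_of_mul_eq_smul (h : x * y = s • (y * x)) (n : ℕ) :
    (x + y) ^ n = ∑ j ∈ range (n + 1), qBinom s n j • (y ^ j * x ^ (n - j)) := by
  induction n with
  | zero => simp
  | succ n ih =>
    have hx : (∑ j ∈ range (n + 1), qBinom s n j • (y ^ j * x ^ (n - j))) * x =
        ∑ j ∈ range (n + 1), qBinom s n (j + 1) • (y ^ (j + 1) * x ^ (n - j)) + x ^ (n + 1) := by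
      rw [sum_mul, sum_range_succ', sum_range_succ, qBinom_eq_zero_of_lt s n.lt_succ_self,
        zero_smul, add_zero]
      refine congrArg₂ (· + ·) (sum_congr rfl fun j hj => ?_) (by simp [← pow_succ])
      rw [smul_mul_assoc, mul_assoc, ← pow_succ, show n - (j + 1) + 1 = n - j by
        simp only [mem_range] at hj; omega]
    have hy : (∑ j ∈ range (n + 1), qBinom s n j • (y ^ j * x ^ (n - j))) * y =
        ∑ j ∈ range (n + 1), (s ^ (n - j) * qBinom s n j) • (y ^ (j + 1) * x ^ (n - j)) := by
      refine (sum_mul ..).trans (sum_congr rfl fun j _ => ?_)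
      have hxy := pow_mul_pow_of_mul_eq_smul h (n - j) 1
      simp only [pow_one, mul_one] at hxy
      rw [smul_mul_assoc, mul_assoc, hxy, mul_smul_comm, smul_smul, ← mul_assoc, ← pow_succ,
        mul_comm (qBinom s n j)]
    rw [pow_succ, ih, mul_add, hx, hy, sum_range_succ' _ (n + 1)]
    simp only [qBinom_succ_succ, add_smul, sum_add_distrib, qBinom_zero_right, one_smul,
      pow_zero, one_mul, Nat.sub_zero, Nat.add_sub_add_right]
    abel

theorem smul_add_smul_mul_pow_eq_zero (h : y * x = s • (x * y)) {N : ℕ} (hx : x ^ N = 0)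
    (a c : R) : (a • x + c • (x * y)) ^ N = 0 := by
  suffices hmul : ∀ n : ℕ, ∃ r, (a • x + c • (x * y)) ^ n = x ^ n * r by
    obtain ⟨r, hr⟩ := hmul N
    rw [hr, hx, zero_mul]
  intro n
  induction n with
  | zero => exact ⟨1, by simp⟩
  | succ n ih =>
    obtain ⟨r, hr⟩ := ih
    have hyx := pow_mul_pow_of_mul_eq_smul h 1 n
    simp only [pow_one, one_mul] at hyx
    refine ⟨a • r + (c * s ^ n) • (y * r), ?_⟩
    rw [pow_succ', hr, add_mul, smul_mul_assoc, smul_mul_assoc, mul_assoc x y, ← mul_assoc y,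
      hyx, smul_mul_assoc, mul_smul_comm, smul_smul, mul_add, mul_smul_comm, mul_smul_comm,
      pow_succ', mul_assoc, mul_assoc, mul_assoc]

end QCommuting

section Coefficients

variable {q : ℂ}

theorem qFactorial_sq_ne_zero (hroot : ∀ j : ℕ, j ≠ 0 → q ^ (2 * j) ≠ 1) (n : ℕ) :
    qFactorial (q ^ 2) n ≠ 0 :=
  prod_ne_zero_iff.mpr fun j _ => sub_ne_zero.mpr fun h =>
    hroot (j + 1) j.succ_ne_zero (by rw [pow_mul, ← h])

theorem sqCoeff_succ_s11 (q : ℂ) (n : ℕ) :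
    sqCoeff q (n + 1) = -q ^ n * sqCoeff q n / (q ^ (n + 1) - q⁻¹ ^ (n + 1)) := by
  rw [sqCoeff, sqCoeff, ← sum_range_id, ← sum_range_id, sum_range_succ, prod_range_succ,
    pow_add q, pow_succ (-1 : ℂ), ← div_div]
  ring

theorem sqCoeff_eq_div (hq : q ≠ 0) (hroot : ∀ j : ℕ, j ≠ 0 → q ^ (2 * j) ≠ 1) (n : ℕ) :
    sqCoeff q n = q ^ (n * n) / qFactorial (q ^ 2) n := by
  induction n with
  | zero => simp [sqCoeff]
  | succ n ih =>
    have hfac := qFactorial_sq_ne_zero hroot n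
    have hlast : 1 - (q ^ 2) ^ (n + 1) ≠ 0 := by
      simpa [qFactorial_succ, hfac] using qFactorial_sq_ne_zero hroot (n + 1)
    have hden : q ^ (n + 1) - q⁻¹ ^ (n + 1) = -(1 - (q ^ 2) ^ (n + 1)) / q ^ (n + 1) := by
      rw [inv_pow]
      field_simp
      ring
    rw [sqCoeff_succ_s11, ih, qFactorial_succ, hden]
    field_simp
    ring

theorem sqCoeff_add_mul_qBinom (hq : q ≠ 0) (hroot : ∀ j : ℕ, j ≠ 0 → q ^ (2 * j) ≠ 1)
    (a b : ℕ) :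
    sqCoeff q (a + b) * qBinom (q ^ 2) (a + b) b =
      sqCoeff q a * sqCoeff q b * (q ^ 2) ^ (a * b) := by
  have hbinom := qBinom_add_mul_qFactorial_mul_qFactorial (q ^ 2) a b
  have ha := qFactorial_sq_ne_zero hroot a
  have hb := qFactorial_sq_ne_zero hroot b
  have hab := qFactorial_sq_ne_zero hroot (a + b)
  rw [sqCoeff_eq_div hq hroot, sqCoeff_eq_div hq hroot, sqCoeff_eq_div hq hroot,
    div_mul_eq_mul_div, div_eq_iff hab, ← hbinom]
  field_simp
  ring

theorem sqCoeff_succ_mul_inv_pow (hq : q ≠ 0) (hroot : ∀ j : ℕ, j ≠ 0 → q ^ (2 * j) ≠ 1)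
    (n : ℕ) :
    sqCoeff q (n + 1) * ((q ^ 2)⁻¹) ^ (n + 1) = sqCoeff q (n + 1) + q⁻¹ * sqCoeff q n := by
  have hfac := qFactorial_sq_ne_zero hroot n
  have hlast : 1 - (q ^ 2) ^ (n + 1) ≠ 0 := by
    simpa [qFactorial_succ, hfac] using qFactorial_sq_ne_zero hroot (n + 1)
  rw [sqCoeff_eq_div hq hroot, sqCoeff_eq_div hq hroot, qFactorial_succ, inv_pow]
  field_simp
  ring

end Coefficients

section QExponential

variable {A : Type*} [Ring A] [Algebra ℂ A] {q : ℂ}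

theorem sqTrunc_succ (q : ℂ) (x : A) (n : ℕ) :
    sqTrunc q x (n + 1) = sqTrunc q x n + sqCoeff q n • x ^ n :=
  sum_range_succ _ _

theorem sqTrunc_succ_of_pow_eq_zero {x : A} {n : ℕ} (hx : x ^ n = 0) :
    sqTrunc q x (n + 1) = sqTrunc q x n := by
  rw [sqTrunc_succ, hx, smul_zero, add_zero]

theorem SemiconjBy.sqTrunc {a x y : A} (h : SemiconjBy a x y) (q : ℂ) (n : ℕ) :
    SemiconjBy a (sqTrunc q x n) (sqTrunc q y n) := by
  simp only [SemiconjBy, _root_.sqTrunc, mul_sum, sum_mul]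
  exact sum_congr rfl fun k _ => ((h.pow_right k).smul_right _).eq

theorem sqTrunc_mul_of_mul_eq_smul {x y : A} {t : ℂ} (h : y * x = t • (x * y)) (n : ℕ) :
    sqTrunc q y n * x = x * sqTrunc q (t • y) n := by
  rw [sqTrunc, sqTrunc, sum_mul, mul_sum]
  refine sum_congr rfl fun k _ => ?_
  have hk := pow_mul_pow_of_mul_eq_smul h k 1
  simp only [pow_one, mul_one] at hk
  rw [smul_mul_assoc, hk, smul_pow, mul_smul_comm, mul_smul_comm]

theorem sqTrunc_inv_sq_smul_succ (hq : q ≠ 0) (hroot : ∀ j : ℕ, j ≠ 0 → q ^ (2 * j) ≠ 1)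
    (x : A) (n : ℕ) :
    sqTrunc q ((q ^ 2)⁻¹ • x) (n + 1) = sqTrunc q x (n + 1) + q⁻¹ • (x * sqTrunc q x n) := by
  induction n with
  | zero => simp [sqTrunc]
  | succ n ih =>
    rw [sqTrunc_succ _ _ (n + 1), ih, sqTrunc_succ q x (n + 1), sqTrunc_succ q x n, smul_pow,
      smul_smul, sqCoeff_succ_mul_inv_pow hq hroot, add_smul,
      mul_add, smul_add, mul_smul_comm, ← pow_succ', smul_smul]
    abel

theorem sqTrunc_mul_eq_add_mul_sqTrunc (hq : q ≠ 0)
    (hroot : ∀ j : ℕ, j ≠ 0 → q ^ (2 * j) ≠ 1) {u v : A} {n : ℕ}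
    (h : v * u = (q ^ 2)⁻¹ • (u * v)) (hv : v ^ n = 0) :
    sqTrunc q v n * u = (u + q⁻¹ • (u * v)) * sqTrunc q v n := by
  have hv' : ((q ^ 2)⁻¹ • v) ^ n = 0 := by rw [smul_pow, hv, smul_zero]
  calc sqTrunc q v n * u = u * sqTrunc q ((q ^ 2)⁻¹ • v) (n + 1) := by
        rw [sqTrunc_mul_of_mul_eq_smul h, sqTrunc_succ_of_pow_eq_zero hv']
    _ = u * (sqTrunc q v n + q⁻¹ • (v * sqTrunc q v n)) := by
        rw [sqTrunc_inv_sq_smul_succ hq hroot, sqTrunc_succ_of_pow_eq_zero hv]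
    _ = (u + q⁻¹ • (u * v)) * sqTrunc q v n := by
        rw [mul_add, add_mul, mul_smul_comm, smul_mul_assoc, mul_assoc]

theorem sqTrunc_add_of_mul_eq_smul (hq : q ≠ 0) (hroot : ∀ j : ℕ, j ≠ 0 → q ^ (2 * j) ≠ 1)
    {x y : A} {N K : ℕ} (h : x * y = q ^ 2 • (y * x)) (hx : x ^ N = 0) (hy : y ^ N = 0)
    (hK : 2 * N ≤ K) :
    sqTrunc q (x + y) K = sqTrunc q x K * sqTrunc q y K := by
  let f : ℕ → ℕ → A := fun a b =>
    (sqCoeff q (a + b) * qBinom (q ^ 2) (a + b) b) • (y ^ b * x ^ a)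
  have hf : ∀ a b, K ≤ a + b → f a b = 0 := by
    intro a b hab
    rcases le_or_gt N a with ha | ha
    · simp [f, pow_eq_zero_of_le ha hx]
    · simp [f, pow_eq_zero_of_le (by omega : N ≤ b) hy]
  calc sqTrunc q (x + y) K = ∑ n ∈ range K, ∑ j ∈ range (n + 1), f (n - j) j := by
        refine sum_congr rfl fun n _ => ?_
        rw [add_pow_of_mul_eq_smul h, smul_sum]
        refine sum_congr rfl fun j hj => ?_
        simp only [f, smul_smul, Nat.sub_add_cancel (Nat.lt_succ_iff.mp (mem_range.mp hj))]
    _ = ∑ a ∈ range K, ∑ b ∈ range K, f a b :=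
        sum_range_sum_range_succ_sub_eq_sum_range_sum_range K f hf
    _ = sqTrunc q x K * sqTrunc q y K := by
        rw [sqTrunc, sqTrunc, sum_mul_sum]
        refine sum_congr rfl fun a _ => sum_congr rfl fun b _ => ?_
        rw [smul_mul_smul_comm, pow_mul_pow_of_mul_eq_smul h, smul_smul,
          ← sqCoeff_add_mul_qBinom hq hroot]

end QExponential

/-- Pentagon identity for the q-exponential: if `u v = q² v u`
(`u, v` nilpotent so the series make sense), then
`s_q(v) s_q(u) = s_q(u + v + q⁻¹ u v)` and moreover
`s_q(u + v + q⁻¹ u v) = s_q(u) s_q(q⁻¹ u v) s_q(v)`. -/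
theorem pentagon_identity {A : Type*} [Ring A] [Algebra ℂ A]
    (q : ℂ) (hq : q ≠ 0) (hroot : ∀ j : ℕ, j ≠ 0 → q ^ (2 * j) ≠ 1)
    (u v : A) (N : ℕ) (hu : u ^ N = 0) (hv : v ^ N = 0)
    (huv : u * v = q ^ 2 • (v * u)) :
    sqTrunc q v (2 * N) * sqTrunc q u (2 * N) =
      sqTrunc q (u + v + q⁻¹ • (u * v)) (2 * N) ∧
    sqTrunc q (u + v + q⁻¹ • (u * v)) (2 * N) =
      sqTrunc q u (2 * N) * sqTrunc q (q⁻¹ • (u * v)) (2 * N) * sqTrunc q v (2 * N) := by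
  set w := q⁻¹ • (u * v)
  have hq2 : q ^ 2 ≠ 0 := pow_ne_zero 2 hq
  have hvu : v * u = (q ^ 2)⁻¹ • (u * v) := by rw [huv, inv_smul_smul₀ hq2]
  have huw : u * w = q ^ 2 • (w * u) := by
    rw [smul_mul_assoc, mul_assoc u v u, hvu, mul_smul_comm, mul_smul_comm, smul_smul, smul_smul,
      mul_right_comm, mul_inv_cancel₀ hq2, one_mul, ← mul_assoc]
  have hwv : w * v = q ^ 2 • (v * w) := by
    rw [smul_mul_assoc, mul_smul_comm, ← mul_assoc v u v, hvu, smul_mul_assoc, smul_smul,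
      smul_smul, mul_right_comm, mul_inv_cancel₀ hq2, one_mul]
  have huwv : (u + w) * v = q ^ 2 • (v * (u + w)) := by
    rw [add_mul, mul_add, smul_add, huv, hwv]
  have hw : w ^ N = 0 := by simpa using smul_add_smul_mul_pow_eq_zero hvu hu 0 q⁻¹
  have huw_pow : (u + w) ^ N = 0 := by simpa using smul_add_smul_mul_pow_eq_zero hvu hu 1 q⁻¹
  have hconj : SemiconjBy (sqTrunc q v (2 * N)) u (u + w) :=
    sqTrunc_mul_eq_add_mul_sqTrunc hq hroot hvu (pow_eq_zero_of_le (by omega) hv)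
  have hsplit :
      sqTrunc q (u + v + w) (2 * N) = sqTrunc q (u + w) (2 * N) * sqTrunc q v (2 * N) := by
    rw [add_right_comm]
    exact sqTrunc_add_of_mul_eq_smul hq hroot huwv huw_pow hv le_rfl
  have hsplit_uw := sqTrunc_add_of_mul_eq_smul hq hroot huw hu hw le_rfl
  exact ⟨(hconj.sqTrunc q (2 * N)).eq.trans hsplit.symm, by rw [hsplit, hsplit_uw]⟩
end
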